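/- arXiv:1711.10165 — 5 statements merged into one kernel-verified Lean document; each statement's English description precedes it below -/
import Mathlib

section
/- Let {U_i}_{i=1}^{d²} be a unitary orthonormal basis (Tr(U_i†U_j)=d·δ_{ij}), and define W_{ij} = (1/d²)(U_iU_j ⊗ |0⟩⟨0| + U_jU_i ⊗ |1⟩⟨1|). Then for any density matrix ρ and control state ρ_c = |ψ_c⟩⟨ψ_c| with |ψ_c⟩ = √p|0⟩ + √(1−p)|1⟩, one has ∑_{ij} W_{ij}(ρ ⊗ ρ_c)W_{ij}† = (p|0⟩⟨0| + (1−p)|1⟩⟨1|) ⊗ I/d + √(p(1−p))(|0⟩⟨1| + |1⟩⟨0|) ⊗ ρ/d². -/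
/-!
Writing `W_{ij} = (U_iU_j ⊗ |0⟩⟨0| + U_jU_i ⊗ |1⟩⟨1|)/d²`, conjugation of `ρ ⊗ ρ_c` by `W_{ij}` has the
diagonal blocks `U_iU_j ρ (U_iU_j)†`, `U_jU_i ρ (U_jU_i)†` and the off-diagonal blocks
`U_iU_j ρ (U_jU_i)†`, `U_jU_i ρ (U_iU_j)†`. Since there are `d²` of them, the Hilbert–Schmidt orthogonal
matrices `U_i` are a basis, and orthogonality turns into the completeness relation
`∑ᵢ (U_i)_{ab} conj (U_i)_{a'b'} = d δ_{aa'} δ_{bb'}`. Completeness gives the twirl `∑ᵢ U_i M U_i† = d Tr(M) I`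
and the expansion `∑ᵢ Tr(U_i M) U_i† = d M`. Twirling twice sums each diagonal block to `d³ I`; twirling
the inner pair and then expanding sums each off-diagonal block to `d² ρ`.
-/

open Matrix Kronecker BigOperators
open scoped ComplexOrder

namespace Matrix

theorem sum_kronecker {α κ m n p q : Type*} [NonUnitalNonAssocSemiring α] [Fintype κ]
    (A : κ → Matrix n m α) (B : Matrix p q α) :
    (∑ k, A k) ⊗ₖ B = ∑ k, A k ⊗ₖ B := by
  ext
  simp [sum_apply, Finset.sum_mul]

section OrthogonalBasis

variable {n ι : Type*} [Fintype n] [DecidableEq n] [Fintype ι] {U : ι → Matrix n n ℂ} {c : ℂ}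

theorem sum_mul_star_eq_ite_of_trace_conjTranspose_mul [DecidableEq ι]
    (hcard : Fintype.card ι = Fintype.card n ^ 2) (hc : c ≠ 0)
    (hortho : ∀ i j, ((U i)ᴴ * U j).trace = if i = j then c else 0) (a b a' b' : n) :
    ∑ i, U i a b * star (U i a' b') = if a = a' ∧ b = b' then c else 0 := by
  -- The rows of `V` are orthogonal; as `V` is square, so are its columns.
  let V : Matrix ι (n × n) ℂ := of fun i x => U i x.1 x.2
  have hrows : V * (c⁻¹ • Vᴴ) = 1 := by
    ext i j
    have hVV : (V * Vᴴ) i j = ((U j)ᴴ * U i).trace := by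
      simp only [V, mul_apply, trace, diag, conjTranspose_apply, of_apply, Fintype.sum_prod_type]
      rw [Finset.sum_comm]
      exact Finset.sum_congr rfl fun _ _ => Finset.sum_congr rfl fun _ _ => mul_comm _ _
    rw [Matrix.mul_smul, smul_apply, hVV, hortho, one_apply]
    rcases eq_or_ne i j with rfl | h
    · simp [hc]
    · simp [h, h.symm]
  have e : ι ≃ n × n := Fintype.equivOfCardEq (by rw [hcard, Fintype.card_prod, sq])
  have hcols := congrFun₂ ((mul_eq_one_comm_of_equiv e).mp hrows) (a', b') (a, b)
  simp only [smul_apply, mul_apply, conjTranspose_apply, V, of_apply, one_apply,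
    Prod.mk.injEq, smul_eq_mul] at hcols
  calc ∑ i, U i a b * star (U i a' b') = c * ∑ i, c⁻¹ * star (U i a' b') * U i a b := by
        rw [Finset.mul_sum]
        exact Finset.sum_congr rfl fun _ _ => by field_simp
    _ = if a = a' ∧ b = b' then c else 0 := by
        rw [hcols]
        simp only [@eq_comm _ a', @eq_comm _ b', mul_ite, mul_one, mul_zero]

theorem sum_mul_mul_conjTranspose_eq_trace_smul_one
    (hcompl : ∀ a b a' b', ∑ i, U i a b * star (U i a' b') = if a = a' ∧ b = b' then c else 0)
    (M : Matrix n n ℂ) :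
    ∑ i, U i * M * (U i)ᴴ = (c * M.trace) • 1 := by
  ext a a'
  calc (∑ i, U i * M * (U i)ᴴ) a a'
      = ∑ b, ∑ b', M b b' * ∑ i, U i a b * star (U i a' b') := by
        simp only [sum_apply, mul_apply, conjTranspose_apply, Finset.sum_mul, Finset.mul_sum]
        rw [Finset.sum_comm_cycle]
        refine Finset.sum_congr rfl fun b _ => ?_
        rw [Finset.sum_comm]
        exact Finset.sum_congr rfl fun _ _ => Finset.sum_congr rfl fun _ _ => by ring
    _ = ((c * M.trace) • (1 : Matrix n n ℂ)) a a' := by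
        simp only [hcompl]
        simp [ite_and, trace, one_apply, Finset.mul_sum, mul_comm]

theorem sum_trace_mul_smul_conjTranspose
    (hcompl : ∀ a b a' b', ∑ i, U i a b * star (U i a' b') = if a = a' ∧ b = b' then c else 0)
    (M : Matrix n n ℂ) :
    ∑ i, (U i * M).trace • (U i)ᴴ = c • M := by
  ext a a'
  calc (∑ i, (U i * M).trace • (U i)ᴴ) a a'
      = ∑ b, ∑ b', M b b' * ∑ i, U i b' b * star (U i a' a) := by
        simp only [sum_apply, smul_apply, trace, diag, mul_apply, conjTranspose_apply, smul_eq_mul,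
          Finset.sum_mul, Finset.mul_sum]
        rw [Finset.sum_comm_cycle]
        refine Finset.sum_congr rfl fun b _ => ?_
        rw [Finset.sum_comm]
        exact Finset.sum_congr rfl fun _ _ => Finset.sum_congr rfl fun _ _ => by ring
    _ = (c • M) a a' := by
        simp only [hcompl]
        simp [ite_and, mul_comm]

theorem sum_sum_mul_mul_conjTranspose_mul
    (hcompl : ∀ a b a' b', ∑ i, U i a b * star (U i a' b') = if a = a' ∧ b = b' then c else 0)
    (M : Matrix n n ℂ) :
    ∑ i, ∑ j, U i * U j * M * (U i * U j)ᴴ = (c ^ 2 * Fintype.card n * M.trace) • 1 := by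
  calc ∑ i, ∑ j, U i * U j * M * (U i * U j)ᴴ
      = ∑ i, U i * (∑ j, U j * M * (U j)ᴴ) * (U i)ᴴ := by
        simp only [Finset.mul_sum, Finset.sum_mul, conjTranspose_mul, Matrix.mul_assoc]
    _ = (c * M.trace) • ∑ i, U i * 1 * (U i)ᴴ := by
        simp only [sum_mul_mul_conjTranspose_eq_trace_smul_one hcompl, Matrix.mul_smul,
          Matrix.smul_mul, ← Finset.smul_sum]
    _ = (c ^ 2 * Fintype.card n * M.trace) • 1 := by
        rw [sum_mul_mul_conjTranspose_eq_trace_smul_one hcompl, trace_one, smul_smul]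
        ring_nf

theorem sum_sum_mul_mul_conjTranspose_swap
    (hcompl : ∀ a b a' b', ∑ i, U i a b * star (U i a' b') = if a = a' ∧ b = b' then c else 0)
    (M : Matrix n n ℂ) :
    ∑ i, ∑ j, U i * U j * M * (U j * U i)ᴴ = c ^ 2 • M := by
  calc ∑ i, ∑ j, U i * U j * M * (U j * U i)ᴴ
      = ∑ j, (∑ i, U i * (U j * M) * (U i)ᴴ) * (U j)ᴴ := by
        rw [Finset.sum_comm]
        simp only [Finset.sum_mul, conjTranspose_mul, Matrix.mul_assoc]
    _ = c • ∑ j, (U j * M).trace • (U j)ᴴ := by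
        simp only [sum_mul_mul_conjTranspose_eq_trace_smul_one hcompl, Matrix.smul_mul,
          Matrix.one_mul, Finset.smul_sum, mul_smul]
    _ = c ^ 2 • M := by
        rw [sum_trace_mul_smul_conjTranspose hcompl, smul_smul, sq]

end OrthogonalBasis

theorem controlled_mul_kronecker_mul_conjTranspose {n : Type*} [Fintype n] (A B ρ : Matrix n n ℂ) (p q s : ℂ) :
    (A ⊗ₖ single (0 : Fin 2) 0 (1 : ℂ) + B ⊗ₖ single (1 : Fin 2) 1 (1 : ℂ))
        * (ρ ⊗ₖ (p • single (0 : Fin 2) 0 (1 : ℂ) + q • single (1 : Fin 2) 1 (1 : ℂ)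
          + s • (single (0 : Fin 2) 1 (1 : ℂ) + single (1 : Fin 2) 0 (1 : ℂ))))
        * (A ⊗ₖ single (0 : Fin 2) 0 (1 : ℂ) + B ⊗ₖ single (1 : Fin 2) 1 (1 : ℂ))ᴴ
      = (A * ρ * Aᴴ) ⊗ₖ (p • single (0 : Fin 2) 0 (1 : ℂ))
        + (A * ρ * Bᴴ) ⊗ₖ (s • single (0 : Fin 2) 1 (1 : ℂ))
        + (B * ρ * Aᴴ) ⊗ₖ (s • single (1 : Fin 2) 0 (1 : ℂ))
        + (B * ρ * Bᴴ) ⊗ₖ (q • single (1 : Fin 2) 1 (1 : ℂ)) := by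
  simp only [conjTranspose_add, conjTranspose_kronecker, conjTranspose_single, star_one,
    add_mul, mul_add, ← mul_kronecker_mul, Matrix.mul_smul, Matrix.smul_mul,
    single_mul_single_same, mul_one, single_mul_single_of_ne, ne_eq, zero_ne_one, one_ne_zero,
    not_false_eq_true, smul_zero, add_zero, zero_add]
  abel

end Matrix

theorem switch_of_two_depolarizing_general (d : ℕ) (hd : 1 ≤ d)
    (U : Fin (d ^ 2) → Matrix (Fin d) (Fin d) ℂ)
    (hortho : ∀ i j, ((U i)ᴴ * (U j)).trace = if i = j then (d : ℂ) else 0)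
    (ρ : Matrix (Fin d) (Fin d) ℂ) (htr : ρ.trace = 1)
    (p : ℝ) :
    ∑ i : Fin (d ^ 2), ∑ j : Fin (d ^ 2),
      (((d : ℂ) ^ 2)⁻¹ • ((U i * U j) ⊗ₖ Matrix.single (0 : Fin 2) 0 (1 : ℂ)
          + (U j * U i) ⊗ₖ Matrix.single (1 : Fin 2) 1 (1 : ℂ)))
        * (ρ ⊗ₖ ((p : ℂ) • Matrix.single (0 : Fin 2) 0 (1 : ℂ)
            + ((1 - p : ℝ) : ℂ) • Matrix.single (1 : Fin 2) 1 (1 : ℂ)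
            + ((Real.sqrt (p * (1 - p)) : ℝ) : ℂ) •
                (Matrix.single (0 : Fin 2) 1 (1 : ℂ)
                  + Matrix.single (1 : Fin 2) 0 (1 : ℂ))))
        * (((d : ℂ) ^ 2)⁻¹ • ((U i * U j) ⊗ₖ Matrix.single (0 : Fin 2) 0 (1 : ℂ)
          + (U j * U i) ⊗ₖ Matrix.single (1 : Fin 2) 1 (1 : ℂ)))ᴴ
    = ((d : ℂ)⁻¹ • (1 : Matrix (Fin d) (Fin d) ℂ)) ⊗ₖ
        ((p : ℂ) • Matrix.single (0 : Fin 2) 0 (1 : ℂ)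
          + ((1 - p : ℝ) : ℂ) • Matrix.single (1 : Fin 2) 1 (1 : ℂ))
      + (((d : ℂ) ^ 2)⁻¹ • ρ) ⊗ₖ
          (((Real.sqrt (p * (1 - p)) : ℝ) : ℂ) •
            (Matrix.single (0 : Fin 2) 1 (1 : ℂ)
              + Matrix.single (1 : Fin 2) 0 (1 : ℂ))) := by
  have hd0 : (d : ℂ) ≠ 0 := by exact_mod_cast (by omega : d ≠ 0)
  have hcompl := sum_mul_star_eq_ite_of_trace_conjTranspose_mul (by simp) hd0 hortho
  simp only [conjTranspose_smul, star_inv₀, star_pow, star_natCast, Matrix.smul_mul,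
    Matrix.mul_smul, smul_smul, controlled_mul_kronecker_mul_conjTranspose]
  simp only [← Finset.smul_sum, Finset.sum_add_distrib, ← sum_kronecker]
  rw [Finset.sum_comm (f := fun i j => U j * U i * ρ * (U i * U j)ᴴ),
    Finset.sum_comm (f := fun i j => U j * U i * ρ * (U j * U i)ᴴ)]
  simp only [sum_sum_mul_mul_conjTranspose_mul hcompl, sum_sum_mul_mul_conjTranspose_swap hcompl,
    Fintype.card_fin, htr, smul_kronecker, kronecker_smul, kronecker_add, smul_add, smul_smul]
  match_scalars <;> field_simp

theorem switch_of_two_depolarizing (d : ℕ) (hd : 1 ≤ d)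
    (U : Fin (d ^ 2) → Matrix (Fin d) (Fin d) ℂ)
    (hU : ∀ i, (U i)ᴴ * U i = 1)
    (hortho : ∀ i j, ((U i)ᴴ * (U j)).trace = if i = j then (d : ℂ) else 0)
    (ρ : Matrix (Fin d) (Fin d) ℂ) (hρ : ρ.PosSemidef) (htr : ρ.trace = 1)
    (p : ℝ) (hp0 : 0 ≤ p) (hp1 : p ≤ 1) :
    ∑ i : Fin (d ^ 2), ∑ j : Fin (d ^ 2),
      (((d : ℂ) ^ 2)⁻¹ • ((U i * U j) ⊗ₖ Matrix.single (0 : Fin 2) 0 (1 : ℂ)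
          + (U j * U i) ⊗ₖ Matrix.single (1 : Fin 2) 1 (1 : ℂ)))
        * (ρ ⊗ₖ ((p : ℂ) • Matrix.single (0 : Fin 2) 0 (1 : ℂ)
            + ((1 - p : ℝ) : ℂ) • Matrix.single (1 : Fin 2) 1 (1 : ℂ)
            + ((Real.sqrt (p * (1 - p)) : ℝ) : ℂ) •
                (Matrix.single (0 : Fin 2) 1 (1 : ℂ)
                  + Matrix.single (1 : Fin 2) 0 (1 : ℂ))))
        * (((d : ℂ) ^ 2)⁻¹ • ((U i * U j) ⊗ₖ Matrix.single (0 : Fin 2) 0 (1 : ℂ)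
          + (U j * U i) ⊗ₖ Matrix.single (1 : Fin 2) 1 (1 : ℂ)))ᴴ
    = ((d : ℂ)⁻¹ • (1 : Matrix (Fin d) (Fin d) ℂ)) ⊗ₖ
        ((p : ℂ) • Matrix.single (0 : Fin 2) 0 (1 : ℂ)
          + ((1 - p : ℝ) : ℂ) • Matrix.single (1 : Fin 2) 1 (1 : ℂ))
      + (((d : ℂ) ^ 2)⁻¹ • ρ) ⊗ₖ
          (((Real.sqrt (p * (1 - p)) : ℝ) : ℂ) •
            (Matrix.single (0 : Fin 2) 1 (1 : ℂ)
              + Matrix.single (1 : Fin 2) 0 (1 : ℂ))) :=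
  switch_of_two_depolarizing_general d hd U hortho ρ htr p
end

section
/- Both marginals of the SWITCH output are independent of the input: for S(ρ) = ½(|0⟩⟨0|+|1⟩⟨1|) ⊗ I/d + ½(|0⟩⟨1|+|1⟩⟨0|) ⊗ ρ/d², the partial trace over the control is I/d, and the partial trace over the system is the fixed control state ½(|0⟩⟨0|+|1⟩⟨1|) + (1/(2d²))(|0⟩⟨1|+|1⟩⟨0|), for every density matrix ρ. -/
open Matrix Kronecker BigOperators

/-- The output of the quantum SWITCH of two completely depolarizing channels
with control in `|+⟩`, written system ⊗ control. -/
noncomputable def switchOut (d : ℕ) (ρ : Matrix (Fin d) (Fin d) ℂ) :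
    Matrix (Fin d × Fin 2) (Fin d × Fin 2) ℂ :=
  (2 * (d : ℂ))⁻¹ • ((1 : Matrix (Fin d) (Fin d) ℂ) ⊗ₖ
      (Matrix.single (0 : Fin 2) 0 (1 : ℂ) + Matrix.single (1 : Fin 2) 1 (1 : ℂ)))
    + (2 * (d : ℂ) ^ 2)⁻¹ • (ρ ⊗ₖ
      (Matrix.single (0 : Fin 2) 1 (1 : ℂ) + Matrix.single (1 : Fin 2) 0 (1 : ℂ)))

/-! A partial trace of a product operator `A ⊗ B` is the remaining factor scaled by the trace of
the factor traced out. In `switchOut` the system factors are `1` and `ρ`, with traces `d` and `1`, and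
the control factors are `|0⟩⟨0| + |1⟩⟨1|` and `|0⟩⟨1| + |1⟩⟨0|`, with traces `2` and `0`; so
neither marginal depends on `ρ` beyond `trace ρ = 1`. -/

namespace Matrix

variable {m n R : Type*} [CommSemiring R]

/-- The partial trace over the second tensor factor. -/
def traceRight [Fintype n] : Matrix (m × n) (m × n) R →ₗ[R] Matrix m m R where
  toFun M := of fun a b => ∑ i, M (a, i) (b, i)
  map_add' M N := by ext a b; simp [Finset.sum_add_distrib]
  map_smul' r M := by ext a b; simp [Finset.mul_sum]

/-- The partial trace over the first tensor factor. -/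
def traceLeft [Fintype m] : Matrix (m × n) (m × n) R →ₗ[R] Matrix n n R where
  toFun M := of fun i j => ∑ a, M (a, i) (a, j)
  map_add' M N := by ext i j; simp [Finset.sum_add_distrib]
  map_smul' r M := by ext i j; simp [Finset.mul_sum]

@[simp]
theorem traceRight_apply [Fintype n] (M : Matrix (m × n) (m × n) R) (a b : m) :
    traceRight M a b = ∑ i, M (a, i) (b, i) := rfl

@[simp]
theorem traceLeft_apply [Fintype m] (M : Matrix (m × n) (m × n) R) (i j : n) :
    traceLeft M i j = ∑ a, M (a, i) (a, j) := rfl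

theorem traceRight_kronecker [Fintype n] (A : Matrix m m R) (B : Matrix n n R) :
    traceRight (A ⊗ₖ B) = B.trace • A := by
  ext a b
  simp [trace, Finset.mul_sum, mul_comm]

theorem traceLeft_kronecker [Fintype m] (A : Matrix m m R) (B : Matrix n n R) :
    traceLeft (A ⊗ₖ B) = A.trace • B := by
  ext i j
  simp [trace, Finset.sum_mul]

end Matrix

theorem switchOut_marginals_constant_general (d : ℕ) (hd : 1 ≤ d)
    (ρ : Matrix (Fin d) (Fin d) ℂ) (htr : ρ.trace = 1) :
    (fun a b : Fin d => ∑ i : Fin 2, switchOut d ρ (a, i) (b, i))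
      = (d : ℂ)⁻¹ • (1 : Matrix (Fin d) (Fin d) ℂ) ∧
    (fun i j : Fin 2 => ∑ a : Fin d, switchOut d ρ (a, i) (a, j))
      = (1 / 2 : ℂ) • (Matrix.single (0 : Fin 2) 0 (1 : ℂ)
            + Matrix.single (1 : Fin 2) 1 (1 : ℂ))
        + (1 / (2 * (d : ℂ) ^ 2)) • (Matrix.single (0 : Fin 2) 1 (1 : ℂ)
            + Matrix.single (1 : Fin 2) 0 (1 : ℂ)) := by
  have hd0 : (d : ℂ) ≠ 0 := Nat.cast_ne_zero.mpr (by omega)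
  have trace_diag : (single (0 : Fin 2) (0 : Fin 2) (1 : ℂ) + single 1 1 1).trace = 2 := by
    rw [trace_add, trace_single_eq_same, trace_single_eq_same]; norm_num
  have trace_offdiag : (single (0 : Fin 2) (1 : Fin 2) (1 : ℂ) + single 1 0 1).trace = 0 := by
    rw [trace_add, trace_single_eq_of_ne _ _ _ (by decide),
      trace_single_eq_of_ne _ _ _ (by decide), add_zero]
  change traceRight (switchOut d ρ) = _ ∧ traceLeft (switchOut d ρ) = _
  simp only [switchOut, map_add, map_smul, traceRight_kronecker, traceLeft_kronecker,
    trace_diag, trace_offdiag, htr, trace_one, Fintype.card_fin, smul_smul, zero_smul,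
    smul_zero, add_zero, one_smul, one_div]
  constructor
  · congr 1; field_simp
  · congr 2; field_simp

theorem switchOut_marginals_constant (d : ℕ) (hd : 1 ≤ d)
    (ρ : Matrix (Fin d) (Fin d) ℂ) (hρ : ρ.IsHermitian) (htr : ρ.trace = 1) :
    (fun a b : Fin d => ∑ i : Fin 2, switchOut d ρ (a, i) (b, i))
      = (d : ℂ)⁻¹ • (1 : Matrix (Fin d) (Fin d) ℂ) ∧
    (fun i j : Fin 2 => ∑ a : Fin d, switchOut d ρ (a, i) (a, j))
      = (1 / 2 : ℂ) • (Matrix.single (0 : Fin 2) 0 (1 : ℂ)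
            + Matrix.single (1 : Fin 2) 1 (1 : ℂ))
        + (1 / (2 * (d : ℂ) ^ 2)) • (Matrix.single (0 : Fin 2) 1 (1 : ℂ)
            + Matrix.single (1 : Fin 2) 0 (1 : ℂ)) :=
  switchOut_marginals_constant_general d hd ρ htr
end

section
/- If ρ is a pure state (rank-one projector), the von Neumann entropy of S(ρ) = ½(|0⟩⟨0|+|1⟩⟨1|) ⊗ I/d + ½(|0⟩⟨1|+|1⟩⟨0|) ⊗ ρ/d² equals −[((d+1)/(2d²)) log((d+1)/(2d²)) + ((d−1)/(2d²)) log((d−1)/(2d²)) + 2(d−1)(1/(2d)) log(1/(2d))]. -/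
open Matrix Kronecker BigOperators

/-!
Write `S(ρ) = a + b N` with `a = 1/(2d)`, `b = 1/(2d²)` and `N = ρ ⊗ σₓ`. Since `ρ` is
idempotent and `σₓ² = 1`, `N³ = N`, so every eigenvalue of `S(ρ)` lies in `{a + b, a - b, a}`.
The traces `tr N = 0` and `tr N² = 2 tr ρ = 2` then force the multiplicities of `a ± b` to be
`1` each.
-/

open Polynomial

def pauliX : Matrix (Fin 2) (Fin 2) ℂ := single 0 1 1 + single 1 0 1

theorem pauliX_mul_self : pauliX * pauliX = 1 := by
  ext i j
  fin_cases i <;> fin_cases j <;> simp [pauliX, mul_apply, single, one_apply]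

theorem trace_pauliX : pauliX.trace = 0 := by
  simp [pauliX, trace, Fin.sum_univ_two, single]

section

variable {m : Type*} [Fintype m] [DecidableEq m] {ρ : Matrix m m ℂ}

theorem kronecker_pauliX_sq (hρ : IsIdempotentElem ρ) : (ρ ⊗ₖ pauliX) ^ 2 = ρ ⊗ₖ 1 := by
  rw [sq, ← mul_kronecker_mul, hρ.eq, pauliX_mul_self]

theorem kronecker_pauliX_pow_three (hρ : IsIdempotentElem ρ) :
    (ρ ⊗ₖ pauliX) ^ 3 = ρ ⊗ₖ pauliX := by
  rw [pow_succ, kronecker_pauliX_sq hρ, ← mul_kronecker_mul, hρ.eq, one_mul]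

end

namespace Matrix.IsHermitian

variable {𝕜 n : Type*} [RCLike 𝕜] [Fintype n] [DecidableEq n] {A : Matrix n n 𝕜}

theorem trace_cfc (hA : A.IsHermitian) (f : ℝ → ℝ) :
    (cfc f A).trace = ∑ i, (f (hA.eigenvalues i) : 𝕜) := by
  rw [hA.cfc_eq, IsHermitian.cfc, Unitary.conjStarAlgAut_apply, trace_mul_comm, ← mul_assoc,
    Unitary.coe_star_mul_self, one_mul, trace_diagonal]
  rfl

theorem trace_aeval (hA : A.IsHermitian) (p : ℝ[X]) :
    (aeval A p).trace = ∑ i, ((p.eval (hA.eigenvalues i) : ℝ) : 𝕜) := by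
  rw [← cfc_polynomial p A hA.isSelfAdjoint, hA.trace_cfc]

theorem eval_eigenvalues_eq_zero (hA : A.IsHermitian) {p : ℝ[X]} (hp : aeval A p = 0) (i : n) :
    p.eval (hA.eigenvalues i) = 0 := by
  have : Nonempty n := ⟨i⟩
  simpa [hp] using
    spectrum.subset_polynomial_aeval A p ⟨_, hA.eigenvalues_mem_spectrum_real i, rfl⟩

end Matrix.IsHermitian

open Finset in
theorem Fintype.sum_comp_of_pow_three_eq {ι : Type*} [Fintype ι] {y : ι → ℝ} {b : ℝ}
    (hb : b ≠ 0) (hcube : ∀ k, y k ^ 3 = b ^ 2 * y k) (hsum : ∑ k, y k = 0)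
    (hsq : ∑ k, y k ^ 2 = 2 * b ^ 2) (g : ℝ → ℝ) :
    ∑ k, g (y k) = g b + g (-b) + (Fintype.card ι - 2) * g 0 := by
  classical
  have hmem : ∀ k ∈ univ, y k ∈ ({b, -b, 0} : Finset ℝ) := by
    intro k _
    have : y k * (y k - b) * (y k + b) = 0 := by linear_combination hcube k
    simp only [mul_eq_zero, sub_eq_zero, add_eq_zero_iff_eq_neg] at this
    simp only [mem_insert, mem_singleton]
    tauto
  have hfiber : ∀ h : ℝ → ℝ, ∑ k, h (y k)
      = #{k | y k = b} * h b + #{k | y k = -b} * h (-b) + #{k | y k = 0} * h 0 := by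
    intro h
    have hb_ne_neg : b ≠ -b := by contrapose! hb; linarith
    rw [← sum_fiberwise_of_maps_to' hmem, sum_insert (by simp [hb_ne_neg, hb]),
      sum_insert (by simpa using hb), sum_singleton, add_assoc]
    simp only [sum_const, nsmul_eq_mul]
  set nb : ℝ := ((#{k | y k = b} : ℕ) : ℝ)
  set nm : ℝ := ((#{k | y k = -b} : ℕ) : ℝ)
  set n0 : ℝ := ((#{k | y k = 0} : ℕ) : ℝ)
  have hcard : (Fintype.card ι : ℝ) = nb + nm + n0 := by
    simpa using hfiber 1
  have hbalance : b * (nb - nm) = 0 := by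
    linear_combination (hfiber fun t => t).symm.trans hsum
  have hsecond : b ^ 2 * (nb + nm - 2) = 0 := by
    linear_combination (hfiber fun t => t ^ 2).symm.trans hsq
  have hdiff := (mul_eq_zero.1 hbalance).resolve_left hb
  have htotal := (mul_eq_zero.1 hsecond).resolve_left (pow_ne_zero 2 hb)
  rw [hfiber g, hcard]
  linear_combination (g b - g 0) * (htotal + hdiff) / 2 + (g (-b) - g 0) * (htotal - hdiff) / 2

theorem aeval_switchOut_X_sub_C (d : ℕ) (ρ : Matrix (Fin d) (Fin d) ℂ) :
    aeval (switchOut d ρ) (X - C (2 * d : ℝ)⁻¹) = (2 * d ^ 2 : ℝ)⁻¹ • (ρ ⊗ₖ pauliX) := by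
  have hdiag : single (0 : Fin 2) (0 : Fin 2) (1 : ℂ) + single 1 1 1 = 1 := by
    ext i j
    fin_cases i <;> fin_cases j <;> simp [single, one_apply]
  rw [map_sub, aeval_X, aeval_C, switchOut, hdiag, one_kronecker_one,
    Algebra.algebraMap_eq_smul_one, ← Complex.coe_smul, ← Complex.coe_smul]
  push_cast
  rw [add_sub_cancel_left, pauliX]

section switchOut

variable {d : ℕ} {ρ : Matrix (Fin d) (Fin d) ℂ} (hS : (switchOut d ρ).IsHermitian)

theorem switchOut_eigenvalues_sub_pow_three (hρ : IsIdempotentElem ρ) (k : Fin d × Fin 2) :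
    (hS.eigenvalues k - (2 * d : ℝ)⁻¹) ^ 3
      = ((2 * d ^ 2 : ℝ)⁻¹) ^ 2 * (hS.eigenvalues k - (2 * d : ℝ)⁻¹) := by
  set a : ℝ := (2 * d : ℝ)⁻¹
  set b : ℝ := (2 * d ^ 2 : ℝ)⁻¹
  have hann : aeval (switchOut d ρ) ((X - C a) ^ 3 - C (b ^ 2) * (X - C a)) = 0 := by
    rw [map_sub, map_mul, map_pow, aeval_switchOut_X_sub_C, aeval_C, _root_.smul_pow,
      kronecker_pauliX_pow_three hρ, Algebra.algebraMap_eq_smul_one, smul_mul_assoc, one_mul,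
      smul_smul, sub_eq_zero, ← pow_succ]
  simpa [sub_eq_zero] using hS.eval_eigenvalues_eq_zero hann k

theorem switchOut_sum_eigenvalues_sub : ∑ k, (hS.eigenvalues k - (2 * d : ℝ)⁻¹) = 0 := by
  have := hS.trace_aeval (X - C (2 * d : ℝ)⁻¹)
  rw [aeval_switchOut_X_sub_C, trace_smul, trace_kronecker, trace_pauliX, mul_zero,
    smul_zero] at this
  simp only [eval_sub, eval_X, eval_C, ← RCLike.ofReal_sum] at this
  exact RCLike.ofReal_eq_zero.1 this.symm

theorem switchOut_sum_eigenvalues_sub_sq (hρ : IsIdempotentElem ρ) (htr : ρ.trace = 1) :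
    ∑ k, (hS.eigenvalues k - (2 * d : ℝ)⁻¹) ^ 2 = 2 * ((2 * d ^ 2 : ℝ)⁻¹) ^ 2 := by
  have := hS.trace_aeval ((X - C (2 * d : ℝ)⁻¹) ^ 2)
  rw [map_pow, aeval_switchOut_X_sub_C, _root_.smul_pow, kronecker_pauliX_sq hρ, trace_smul,
    trace_kronecker, htr, trace_one] at this
  simp only [eval_pow, eval_sub, eval_X, eval_C, ← RCLike.ofReal_sum] at this
  apply RCLike.ofReal_injective (K := ℂ)
  rw [← this]
  simp [Complex.real_smul, mul_comm]

end switchOut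

theorem switchOut_entropy_pure_general (d : ℕ) (hd : 2 ≤ d)
    (ρ : Matrix (Fin d) (Fin d) ℂ)
    (hproj : ρ * ρ = ρ) (htr : ρ.trace = 1)
    (hS : (switchOut d ρ).IsHermitian) :
    -∑ k : Fin d × Fin 2, hS.eigenvalues k * Real.log (hS.eigenvalues k)
      = -(((d : ℝ) + 1) / (2 * (d : ℝ) ^ 2) * Real.log (((d : ℝ) + 1) / (2 * (d : ℝ) ^ 2))
          + ((d : ℝ) - 1) / (2 * (d : ℝ) ^ 2) * Real.log (((d : ℝ) - 1) / (2 * (d : ℝ) ^ 2))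
          + 2 * ((d : ℝ) - 1) * (1 / (2 * (d : ℝ))) * Real.log (1 / (2 * (d : ℝ)))) := by
  have hd0 : (d : ℝ) ≠ 0 := by positivity
  have key := Fintype.sum_comp_of_pow_three_eq (by positivity)
    (switchOut_eigenvalues_sub_pow_three hS hproj) (switchOut_sum_eigenvalues_sub hS)
    (switchOut_sum_eigenvalues_sub_sq hS hproj htr)
    fun t => ((2 * d : ℝ)⁻¹ + t) * Real.log ((2 * d : ℝ)⁻¹ + t)
  have hplus : (2 * d : ℝ)⁻¹ + (2 * d ^ 2 : ℝ)⁻¹ = (d + 1) / (2 * d ^ 2) := by field_simp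
  have hminus : (2 * d : ℝ)⁻¹ + -(2 * d ^ 2 : ℝ)⁻¹ = (d - 1) / (2 * d ^ 2) := by
    field_simp; ring
  simp only [add_sub_cancel, hplus, hminus, add_zero, Fintype.card_prod, Fintype.card_fin] at key
  rw [key, inv_eq_one_div]
  push_cast
  ring

theorem switchOut_entropy_pure (d : ℕ) (hd : 2 ≤ d)
    (ρ : Matrix (Fin d) (Fin d) ℂ) (hρ : ρ.IsHermitian)
    (hproj : ρ * ρ = ρ) (htr : ρ.trace = 1)
    (hS : (switchOut d ρ).IsHermitian) :
    -∑ k : Fin d × Fin 2, hS.eigenvalues k * Real.log (hS.eigenvalues k)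
      = -(((d : ℝ) + 1) / (2 * (d : ℝ) ^ 2) * Real.log (((d : ℝ) + 1) / (2 * (d : ℝ) ^ 2))
          + ((d : ℝ) - 1) / (2 * (d : ℝ) ^ 2) * Real.log (((d : ℝ) - 1) / (2 * (d : ℝ) ^ 2))
          + 2 * ((d : ℝ) - 1) * (1 / (2 * (d : ℝ))) * Real.log (1 / (2 * (d : ℝ)))) :=
  switchOut_entropy_pure_general d hd ρ hproj htr hS
end

section
/- Over all d×d density matrices ρ, the von Neumann entropy of S(ρ) = ½(|0⟩⟨0|+|1⟩⟨1|) ⊗ I/d + ½(|0⟩⟨1|+|1⟩⟨0|) ⊗ ρ/d² is minimized exactly when ρ is a pure state. -/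
open Matrix Kronecker BigOperators
open scoped ComplexOrder

/-!
Writing `ρ = U diag(λ) U*` and diagonalising the flip `!![0, 1; 1, 0]` by the Hadamard matrix,
`S(ρ)` is similar to a diagonal matrix with entries `1/(2d) ± λᵢ/(2d²)`, so its entropy is
`-∑ᵢ f(λᵢ)` with `f(x) = φ(a + b x) + φ(a - b x)`, `φ(t) = t log t`, `a = 1/(2d)`, `b = 1/(2d²)`.
This `f` is strictly convex on `[0, 1]`, so on the probability simplex the chord bound
`f(x) ≤ x f(1) + (1 - x) f(0)` sums to `∑ᵢ f(λᵢ) ≤ f(1) + (d - 1) f(0)`, with equality iff every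
`λᵢ ∈ {0, 1}`, i.e. iff `ρ` is idempotent.
-/

open Polynomial

namespace Matrix

variable {n : Type*} [Fintype n] [DecidableEq n]

theorem charpoly_mul_mul_of_mul_eq_one {R : Type*} [CommRing R] {P Q : Matrix n n R}
    (hQP : Q * P = 1) (A : Matrix n n R) : (P * A * Q).charpoly = A.charpoly := by
  rw [charpoly_mul_comm, ← Matrix.mul_assoc, hQP, Matrix.one_mul]

variable {𝕜 : Type*} [RCLike 𝕜] {A : Matrix n n 𝕜}

theorem IsHermitian.sum_comp_eigenvalues_of_charpoly_eq (hA : A.IsHermitian) {μ : n → ℝ}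
    (h : A.charpoly = ∏ i, (X - C (μ i : 𝕜))) (g : ℝ → ℝ) :
    ∑ i, g (hA.eigenvalues i) = ∑ i, g (μ i) := by
  have hprod : ∏ i, (X - C (μ i : 𝕜)) =
      ((Finset.univ.val.map μ).map (RCLike.ofReal : ℝ → 𝕜) |>.map fun a => X - C a).prod := by
    simp only [Multiset.map_map]; rfl
  have hroots : (Finset.univ.val.map hA.eigenvalues).map (RCLike.ofReal : ℝ → 𝕜) =
      (Finset.univ.val.map μ).map (RCLike.ofReal : ℝ → 𝕜) := by
    rw [Multiset.map_map, ← hA.roots_charpoly_eq_eigenvalues, h, hprod,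
      roots_multiset_prod_X_sub_C]
  have hsum (w : n → ℝ) : ∑ i, g (w i) = ((Finset.univ.val.map w).map g).sum := by
    rw [Multiset.map_map]; rfl
  rw [hsum, hsum, Multiset.map_injective RCLike.ofReal_injective hroots]

theorem IsHermitian.mul_self_eq_self_iff (hA : A.IsHermitian) :
    A * A = A ↔ ∀ i, hA.eigenvalues i = 0 ∨ hA.eigenvalues i = 1 := by
  rw [← isIdempotentElem_iff, isIdempotentElem_iff_spectrum_subset ℝ A hA,
    hA.spectrum_real_eq_range_eigenvalues, Set.range_subset_iff]
  simp

end Matrix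

section Convexity

open Finset

variable {ι : Type*} [Fintype ι] {h : ℝ → ℝ}

theorem StrictConvexOn.comp_add_mul {s : Set ℝ} {f : ℝ → ℝ} (hf : StrictConvexOn ℝ s f)
    {a b : ℝ} (hb : b ≠ 0) :
    StrictConvexOn ℝ ((fun x => a + b * x) ⁻¹' s) (fun x => f (a + b * x)) := by
  refine ⟨?_, fun x hx y hy hxy p q hp hq hpq => ?_⟩
  · intro x hx y hy p q hp hq hpq
    have hmem := hf.1 hx hy hp hq hpq
    simp only [Set.mem_preimage, smul_eq_mul] at hmem ⊢
    convert hmem using 1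
    linear_combination (-a) * hpq
  · have hlt := hf.2 hx hy (by simpa [hb] using hxy) hp hq hpq
    simp only [smul_eq_mul] at hlt ⊢
    convert hlt using 2
    linear_combination (-a) * hpq

theorem ConvexOn.le_chord_zero_one (hh : ConvexOn ℝ (Set.Icc 0 1) h) {x : ℝ}
    (hx : x ∈ Set.Icc 0 1) : h x ≤ x * h 1 + (1 - x) * h 0 := by
  have := hh.2 (Set.right_mem_Icc.2 zero_le_one) (Set.left_mem_Icc.2 zero_le_one) hx.1
    (sub_nonneg.2 hx.2) (add_sub_cancel x 1)
  simpa using this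

theorem StrictConvexOn.lt_chord_zero_one (hh : StrictConvexOn ℝ (Set.Icc 0 1) h) {x : ℝ}
    (hx : x ∈ Set.Ioo 0 1) : h x < x * h 1 + (1 - x) * h 0 := by
  have := hh.2 (Set.right_mem_Icc.2 zero_le_one) (Set.left_mem_Icc.2 zero_le_one) one_ne_zero
    hx.1 (sub_pos.2 hx.2) (add_sub_cancel x 1)
  simpa using this

theorem sum_chord_zero_one {x : ι → ℝ} (hx : ∑ i, x i = 1) :
    ∑ i, (x i * h 1 + (1 - x i) * h 0) = h 1 + (Fintype.card ι - 1) * h 0 := by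
  simp only [sum_add_distrib, ← sum_mul, sum_sub_distrib, hx, sum_const, card_univ, nsmul_one,
    one_mul]

theorem mem_Icc_of_nonneg_of_sum_eq_one {x : ι → ℝ} (hx0 : ∀ i, 0 ≤ x i) (hx : ∑ i, x i = 1)
    (i : ι) : x i ∈ Set.Icc 0 1 :=
  ⟨hx0 i, hx ▸ single_le_sum (fun j _ => hx0 j) (mem_univ i)⟩

theorem ConvexOn.sum_le_of_sum_eq_one (hh : ConvexOn ℝ (Set.Icc 0 1) h) {x : ι → ℝ}
    (hx0 : ∀ i, 0 ≤ x i) (hx : ∑ i, x i = 1) :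
    ∑ i, h (x i) ≤ h 1 + (Fintype.card ι - 1) * h 0 := by
  rw [← sum_chord_zero_one hx]
  exact sum_le_sum fun i _ => hh.le_chord_zero_one (mem_Icc_of_nonneg_of_sum_eq_one hx0 hx i)

theorem StrictConvexOn.sum_eq_iff_of_sum_eq_one (hh : StrictConvexOn ℝ (Set.Icc 0 1) h)
    {x : ι → ℝ} (hx0 : ∀ i, 0 ≤ x i) (hx : ∑ i, x i = 1) :
    ∑ i, h (x i) = h 1 + (Fintype.card ι - 1) * h 0 ↔ ∀ i, x i = 0 ∨ x i = 1 := by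
  have hIcc := mem_Icc_of_nonneg_of_sum_eq_one hx0 hx
  rw [← sum_chord_zero_one hx,
    sum_eq_sum_iff_of_le fun i _ => hh.convexOn.le_chord_zero_one (hIcc i)]
  refine forall_congr' fun i => ⟨fun heq => ?_, ?_⟩
  · by_contra! hne
    have := hh.lt_chord_zero_one
      ⟨(hIcc i).1.lt_of_ne hne.1.symm, (hIcc i).2.lt_of_ne hne.2⟩
    exact this.ne (heq (mem_univ i))
  · rintro (hi | hi) - <;> simp [hi]

end Convexity

section PairMulLog

open Real

noncomputable def pairMulLog (a b x : ℝ) : ℝ :=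
  (a + b * x) * log (a + b * x) + (a - b * x) * log (a - b * x)

theorem strictConvexOn_pairMulLog {a b : ℝ} (hb : 0 < b) (hba : b ≤ a) :
    StrictConvexOn ℝ (Set.Icc 0 1) (pairMulLog a b) := by
  have hplus := (strictConvexOn_mul_log.comp_add_mul (a := a) hb.ne').subset
    (fun x hx => by simp only [Set.mem_preimage, Set.mem_Ici]; nlinarith [hx.1]) (convex_Icc 0 1)
  have hminus := (strictConvexOn_mul_log.comp_add_mul (a := a) (neg_ne_zero.2 hb.ne')).subset
    (fun x hx => by simp only [Set.mem_preimage, Set.mem_Ici]; nlinarith [hx.2]) (convex_Icc 0 1)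
  exact (hplus.add hminus).congr fun x _ => by simp [pairMulLog, sub_eq_add_neg]

end PairMulLog

section SwitchOut

variable {d : ℕ} {ρ : Matrix (Fin d) (Fin d) ℂ}

noncomputable def switchOutEigenvalues (d : ℕ) (μ : Fin d → ℝ) (p : Fin d × Fin 2) : ℝ :=
  (2 * (d : ℝ))⁻¹ + (2 * (d : ℝ) ^ 2)⁻¹ * (μ p.1 * ![1, -1] p.2)

theorem switchOut_eq_smul_one_add_smul_kronecker (d : ℕ) (ρ : Matrix (Fin d) (Fin d) ℂ) :
    switchOut d ρ = (2 * (d : ℂ))⁻¹ • 1 + (2 * (d : ℂ) ^ 2)⁻¹ • (ρ ⊗ₖ !![0, 1; 1, 0]) := by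
  have hI : single 0 0 1 + single 1 1 1 = (1 : Matrix (Fin 2) (Fin 2) ℂ) := by
    ext i j; fin_cases i <;> fin_cases j <;> simp [one_apply]
  have hX : single 0 1 1 + single 1 0 1 = (!![0, 1; 1, 0] : Matrix (Fin 2) (Fin 2) ℂ) := by
    ext i j; fin_cases i <;> fin_cases j <;> simp
  rw [switchOut, hI, hX, one_kronecker_one]

theorem hadamard_mul_half_hadamard :
    !![(1 : ℂ), 1; 1, -1] * ((2 : ℂ)⁻¹ • !![(1 : ℂ), 1; 1, -1]) = 1 := by
  ext i j; fin_cases i <;> fin_cases j <;> norm_num [mul_apply, Fin.sum_univ_two, one_apply]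

theorem half_hadamard_mul_hadamard :
    ((2 : ℂ)⁻¹ • !![(1 : ℂ), 1; 1, -1]) * !![(1 : ℂ), 1; 1, -1] = 1 := by
  rw [smul_mul_assoc, ← mul_smul_comm, hadamard_mul_half_hadamard]

theorem hadamard_mul_diagonal_mul_half_hadamard :
    !![(1 : ℂ), 1; 1, -1] * diagonal ![1, -1] * ((2 : ℂ)⁻¹ • !![(1 : ℂ), 1; 1, -1]) =
      !![0, 1; 1, 0] := by
  ext i j; fin_cases i <;> fin_cases j <;> norm_num [mul_apply, Fin.sum_univ_two, vecMul_diagonal]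

theorem switchOut_eq_conj_diagonal (hρ : ρ.IsHermitian) :
    switchOut d ρ =
      ((hρ.eigenvectorUnitary : Matrix (Fin d) (Fin d) ℂ) ⊗ₖ !![(1 : ℂ), 1; 1, -1]) *
        diagonal (fun p => (switchOutEigenvalues d hρ.eigenvalues p : ℂ)) *
        (star (hρ.eigenvectorUnitary : Matrix (Fin d) (Fin d) ℂ) ⊗ₖ
          ((2 : ℂ)⁻¹ • !![(1 : ℂ), 1; 1, -1])) := by
  set U := (hρ.eigenvectorUnitary : Matrix (Fin d) (Fin d) ℂ)
  set D := diagonal (fun i => (hρ.eigenvalues i : ℂ))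
  have hρ_eq : ρ = U * D * star U := by
    have := hρ.spectral_theorem
    rwa [Unitary.conjStarAlgAut_apply] at this
  have hdiag : diagonal (fun p => (switchOutEigenvalues d hρ.eigenvalues p : ℂ)) =
      (2 * (d : ℂ))⁻¹ • 1 + (2 * (d : ℂ) ^ 2)⁻¹ • (D ⊗ₖ diagonal ![1, -1]) := by
    rw [diagonal_kronecker_diagonal, ← diagonal_one, ← diagonal_smul, ← diagonal_smul,
      diagonal_add]
    congr 1
    ext ⟨i, j⟩
    fin_cases j <;> simp [switchOutEigenvalues]
  have hPQ :
      (U ⊗ₖ !![(1 : ℂ), 1; 1, -1]) * (star U ⊗ₖ ((2 : ℂ)⁻¹ • !![(1 : ℂ), 1; 1, -1])) = 1 := by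
    rw [← mul_kronecker_mul, mem_unitaryGroup_iff.mp hρ.eigenvectorUnitary.2,
      hadamard_mul_half_hadamard, one_kronecker_one]
  rw [switchOut_eq_smul_one_add_smul_kronecker, hdiag, hρ_eq]
  simp only [Matrix.mul_add, Matrix.add_mul, Matrix.mul_smul, Matrix.smul_mul, Matrix.mul_one, hPQ]
  rw [← mul_kronecker_mul, ← mul_kronecker_mul, hadamard_mul_diagonal_mul_half_hadamard]

theorem charpoly_switchOut (hρ : ρ.IsHermitian) :
    (switchOut d ρ).charpoly = ∏ p, (X - C (switchOutEigenvalues d hρ.eigenvalues p : ℂ)) := by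
  rw [switchOut_eq_conj_diagonal hρ, charpoly_mul_mul_of_mul_eq_one, charpoly_diagonal]
  rw [← mul_kronecker_mul, mem_unitaryGroup_iff'.mp hρ.eigenvectorUnitary.2,
    half_hadamard_mul_hadamard, one_kronecker_one]

theorem switchOut_sum_mul_log_eigenvalues (hρ : ρ.IsHermitian)
    (hS : (switchOut d ρ).IsHermitian) :
    ∑ k, hS.eigenvalues k * Real.log (hS.eigenvalues k) =
      ∑ i, pairMulLog (2 * (d : ℝ))⁻¹ (2 * (d : ℝ) ^ 2)⁻¹ (hρ.eigenvalues i) := by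
  -- `μ` is given explicitly: unification through `RCLike.ofReal` would unfold it.
  rw [hS.sum_comp_eigenvalues_of_charpoly_eq (μ := switchOutEigenvalues d hρ.eigenvalues)
      (charpoly_switchOut hρ) (fun t => t * Real.log t), Fintype.sum_prod_type]
  refine Finset.sum_congr rfl fun i _ => ?_
  simp only [Fin.sum_univ_two, switchOutEigenvalues, pairMulLog, cons_val_zero, cons_val_one,
    mul_one, mul_neg, ← sub_eq_add_neg]

end SwitchOut

theorem switchOut_entropy_minimized_at_pure_general (d : ℕ) :
    ∀ (ρ : Matrix (Fin d) (Fin d) ℂ), ρ.PosSemidef → ρ.trace = 1 →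
    ∀ (hS : (switchOut d ρ).IsHermitian),
    (-(((d : ℝ) + 1) / (2 * (d : ℝ) ^ 2) * Real.log (((d : ℝ) + 1) / (2 * (d : ℝ) ^ 2))
        + ((d : ℝ) - 1) / (2 * (d : ℝ) ^ 2) * Real.log (((d : ℝ) - 1) / (2 * (d : ℝ) ^ 2))
        + 2 * ((d : ℝ) - 1) * (1 / (2 * (d : ℝ))) * Real.log (1 / (2 * (d : ℝ))))
      ≤ -∑ k : Fin d × Fin 2, hS.eigenvalues k * Real.log (hS.eigenvalues k)) ∧
    ((-∑ k : Fin d × Fin 2, hS.eigenvalues k * Real.log (hS.eigenvalues k)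
        = -(((d : ℝ) + 1) / (2 * (d : ℝ) ^ 2) * Real.log (((d : ℝ) + 1) / (2 * (d : ℝ) ^ 2))
          + ((d : ℝ) - 1) / (2 * (d : ℝ) ^ 2) * Real.log (((d : ℝ) - 1) / (2 * (d : ℝ) ^ 2))
          + 2 * ((d : ℝ) - 1) * (1 / (2 * (d : ℝ))) * Real.log (1 / (2 * (d : ℝ)))))
      ↔ ρ * ρ = ρ) := by
  intro ρ hρ htr hS
  rw [switchOut_sum_mul_log_eigenvalues hρ.isHermitian, hρ.isHermitian.mul_self_eq_self_iff]
  have hd : 1 ≤ d := Nat.one_le_iff_ne_zero.2 (by rintro rfl; simp at htr)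
  have hdR : (1 : ℝ) ≤ d := by exact_mod_cast hd
  set a : ℝ := (2 * (d : ℝ))⁻¹
  set b : ℝ := (2 * (d : ℝ) ^ 2)⁻¹
  have hb : 0 < b := by positivity
  have hba : b ≤ a := inv_anti₀ (by positivity) (by nlinarith)
  have hconvex := strictConvexOn_pairMulLog hb hba
  have hsum : ∑ i, hρ.isHermitian.eigenvalues i = 1 := by
    simpa [htr, eq_comm] using congrArg Complex.re hρ.isHermitian.trace_eq_sum_eigenvalues
  have hconst : ((d : ℝ) + 1) / (2 * (d : ℝ) ^ 2) * Real.log (((d : ℝ) + 1) / (2 * (d : ℝ) ^ 2))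
        + ((d : ℝ) - 1) / (2 * (d : ℝ) ^ 2) * Real.log (((d : ℝ) - 1) / (2 * (d : ℝ) ^ 2))
        + 2 * ((d : ℝ) - 1) * (1 / (2 * (d : ℝ))) * Real.log (1 / (2 * (d : ℝ)))
      = pairMulLog a b 1 + (Fintype.card (Fin d) - 1) * pairMulLog a b 0 := by
    have hplus : ((d : ℝ) + 1) / (2 * (d : ℝ) ^ 2) = a + b := by simp only [a, b]; field_simp
    have hminus : ((d : ℝ) - 1) / (2 * (d : ℝ) ^ 2) = a - b := by simp only [a, b]; field_simp
    rw [hplus, hminus, one_div, Fintype.card_fin]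
    simp only [pairMulLog, mul_one, mul_zero, add_zero, sub_zero]
    ring
  rw [hconst, neg_inj, ← hconvex.sum_eq_iff_of_sum_eq_one hρ.eigenvalues_nonneg hsum]
  exact ⟨neg_le_neg (hconvex.convexOn.sum_le_of_sum_eq_one hρ.eigenvalues_nonneg hsum), Iff.rfl⟩

theorem switchOut_entropy_minimized_at_pure (d : ℕ) (hd : 2 ≤ d) :
    ∀ (ρ : Matrix (Fin d) (Fin d) ℂ), ρ.PosSemidef → ρ.trace = 1 →
    ∀ (hS : (switchOut d ρ).IsHermitian),
    (-(((d : ℝ) + 1) / (2 * (d : ℝ) ^ 2) * Real.log (((d : ℝ) + 1) / (2 * (d : ℝ) ^ 2))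
        + ((d : ℝ) - 1) / (2 * (d : ℝ) ^ 2) * Real.log (((d : ℝ) - 1) / (2 * (d : ℝ) ^ 2))
        + 2 * ((d : ℝ) - 1) * (1 / (2 * (d : ℝ))) * Real.log (1 / (2 * (d : ℝ))))
      ≤ -∑ k : Fin d × Fin 2, hS.eigenvalues k * Real.log (hS.eigenvalues k)) ∧
    ((-∑ k : Fin d × Fin 2, hS.eigenvalues k * Real.log (hS.eigenvalues k)
        = -(((d : ℝ) + 1) / (2 * (d : ℝ) ^ 2) * Real.log (((d : ℝ) + 1) / (2 * (d : ℝ) ^ 2))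
          + ((d : ℝ) - 1) / (2 * (d : ℝ) ^ 2) * Real.log (((d : ℝ) - 1) / (2 * (d : ℝ) ^ 2))
          + 2 * ((d : ℝ) - 1) * (1 / (2 * (d : ℝ))) * Real.log (1 / (2 * (d : ℝ)))))
      ↔ ρ * ρ = ρ) :=
  switchOut_entropy_minimized_at_pure_general d
end

section
/- The Holevo information of the switched completely depolarizing channels is positive: χ = log d + H(ρ̃_c) − H_min > 0 for all d ≥ 2, where H(ρ̃_c) is the binary-type entropy of the 2×2 matrix ρ̃_c = ½(|0⟩⟨0|+|1⟩⟨1|) + (1/(2d²))(|0⟩⟨1|+|1⟩⟨0|) (eigenvalues ½ ± 1/(2d²)), and H_min = −[((d+1)/(2d²)) log((d+1)/(2d²)) + ((d−1)/(2d²)) log((d−1)/(2d²)) + (d−1)(1/d) log(1/(2d))]. -/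
/-- Two-point strict convexity instance for `x * log x`. -/
lemma aux_convexity (t : ℝ) (h0 : 0 < t) (h1 : t < 1) :
    (1 + t ^ 2) * Real.log (1 + t ^ 2) + (1 - t ^ 2) * Real.log (1 - t ^ 2)
      < t * ((1 + t) * Real.log (1 + t)) + t * ((1 - t) * Real.log (1 - t)) := by
  have hf := Real.strictConvexOn_mul_log
  have h1t : (1 + t : ℝ) ∈ Set.Ici (0 : ℝ) := by simp only [Set.mem_Ici]; linarith
  have hone : (1 : ℝ) ∈ Set.Ici (0 : ℝ) := by simp only [Set.mem_Ici]; norm_num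
  have hmt : (1 - t : ℝ) ∈ Set.Ici (0 : ℝ) := by simp only [Set.mem_Ici]; linarith
  have hne1 : (1 + t : ℝ) ≠ 1 := by intro h; linarith
  have hne2 : (1 - t : ℝ) ≠ 1 := by intro h; linarith
  have hb : (0:ℝ) < 1 - t := by linarith
  have hab : t + (1 - t) = (1:ℝ) := by ring
  have hA := hf.2 h1t hone hne1 h0 hb hab
  have hB := hf.2 hmt hone hne2 h0 hb hab
  simp only [smul_eq_mul, Real.log_one, mul_one, mul_zero] at hA hB
  have e1 : t * (1 + t) + (1 - t) = 1 + t ^ 2 := by ring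
  have e2 : t * (1 - t) + (1 - t) = 1 - t ^ 2 := by ring
  rw [e1] at hA
  rw [e2] at hB
  linarith [hA, hB]

theorem holevo_information_positive (d : ℕ) (hd : 2 ≤ d) :
    0 < Real.log d
      + (-(1 / 2 + 1 / (2 * (d : ℝ) ^ 2)) * Real.log (1 / 2 + 1 / (2 * (d : ℝ) ^ 2))
         - (1 / 2 - 1 / (2 * (d : ℝ) ^ 2)) * Real.log (1 / 2 - 1 / (2 * (d : ℝ) ^ 2)))
      - (-(((d : ℝ) + 1) / (2 * (d : ℝ) ^ 2) * Real.log (((d : ℝ) + 1) / (2 * (d : ℝ) ^ 2))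
          + ((d : ℝ) - 1) / (2 * (d : ℝ) ^ 2) * Real.log (((d : ℝ) - 1) / (2 * (d : ℝ) ^ 2))
          + ((d : ℝ) - 1) * (1 / (d : ℝ)) * Real.log (1 / (2 * (d : ℝ))))) := by
  have hD : (2 : ℝ) ≤ (d : ℝ) := by exact_mod_cast hd
  set D : ℝ := (d : ℝ) with hDdef
  have hD0 : 0 < D := by linarith
  have hD1 : 1 < D := by linarith
  have hDne : D ≠ 0 := ne_of_gt hD0
  have hDm1 : (0:ℝ) < D - 1 := by linarith
  have hD2m1 : (0:ℝ) < D ^ 2 - 1 := by nlinarith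
  have hlogD2 : Real.log (D ^ 2) = 2 * Real.log D := by
    rw [Real.log_pow]; push_cast; ring
  have hlog2D2 : Real.log (2 * D ^ 2) = Real.log 2 + 2 * Real.log D := by
    rw [Real.log_mul (by norm_num) (by positivity), hlogD2]
  have hlog2D : Real.log (2 * D) = Real.log 2 + Real.log D := by
    rw [Real.log_mul (by norm_num) hDne]
  have e1 : (1:ℝ) / 2 + 1 / (2 * D ^ 2) = (D ^ 2 + 1) / (2 * D ^ 2) := by
    field_simp; try ring
  have e2 : (1:ℝ) / 2 - 1 / (2 * D ^ 2) = (D ^ 2 - 1) / (2 * D ^ 2) := by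
    field_simp; try ring
  have h1 : Real.log (1 / 2 + 1 / (2 * D ^ 2))
      = Real.log (D ^ 2 + 1) - (Real.log 2 + 2 * Real.log D) := by
    rw [e1, Real.log_div (by positivity) (by positivity), hlog2D2]
  have h2 : Real.log (1 / 2 - 1 / (2 * D ^ 2))
      = Real.log (D ^ 2 - 1) - (Real.log 2 + 2 * Real.log D) := by
    rw [e2, Real.log_div (ne_of_gt hD2m1) (by positivity), hlog2D2]
  have h3 : Real.log ((D + 1) / (2 * D ^ 2))
      = Real.log (D + 1) - (Real.log 2 + 2 * Real.log D) := by
    rw [Real.log_div (by positivity) (by positivity), hlog2D2]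
  have h4 : Real.log ((D - 1) / (2 * D ^ 2))
      = Real.log (D - 1) - (Real.log 2 + 2 * Real.log D) := by
    rw [Real.log_div (ne_of_gt hDm1) (by positivity), hlog2D2]
  have h5 : Real.log (1 / (2 * D)) = -(Real.log 2 + Real.log D) := by
    rw [one_div, Real.log_inv, hlog2D]
  -- convexity inequality at t = 1/D
  have ht0 : (0:ℝ) < 1 / D := by positivity
  have ht1 : 1 / D < 1 := by rw [div_lt_one hD0]; linarith
  have key := aux_convexity (1 / D) ht0 ht1
  have k1 : Real.log (1 + (1 / D) ^ 2) = Real.log (D ^ 2 + 1) - 2 * Real.log D := by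
    have e : 1 + (1 / D) ^ 2 = (D ^ 2 + 1) / D ^ 2 := by field_simp; try ring
    rw [e, Real.log_div (by positivity) (by positivity), hlogD2]
  have k2 : Real.log (1 - (1 / D) ^ 2) = Real.log (D ^ 2 - 1) - 2 * Real.log D := by
    have e : 1 - (1 / D) ^ 2 = (D ^ 2 - 1) / D ^ 2 := by field_simp; try ring
    rw [e, Real.log_div (ne_of_gt hD2m1) (by positivity), hlogD2]
  have k3 : Real.log (1 + 1 / D) = Real.log (D + 1) - Real.log D := by
    have e : 1 + 1 / D = (D + 1) / D := by field_simp; try ring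
    rw [e, Real.log_div (by positivity) hDne]
  have k4 : Real.log (1 - 1 / D) = Real.log (D - 1) - Real.log D := by
    have e : 1 - 1 / D = (D - 1) / D := by field_simp
    rw [e, Real.log_div (ne_of_gt hDm1) hDne]
  rw [k1, k2, k3, k4] at key
  rw [h1, h2, h3, h4, h5]
  set L1 := Real.log (D + 1) with hL1
  set L2 := Real.log (D - 1) with hL2
  set L3 := Real.log D with hL3
  set L4 := Real.log 2 with hL4
  set L5 := Real.log (D ^ 2 + 1) with hL5
  set L6 := Real.log (D ^ 2 - 1) with hL6
  have heq : L3
      + (-(1 / 2 + 1 / (2 * D ^ 2)) * (L5 - (L4 + 2 * L3))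
         - (1 / 2 - 1 / (2 * D ^ 2)) * (L6 - (L4 + 2 * L3)))
      - (-((D + 1) / (2 * D ^ 2) * (L1 - (L4 + 2 * L3))
          + (D - 1) / (2 * D ^ 2) * (L2 - (L4 + 2 * L3))
          + (D - 1) * (1 / D) * -(L4 + L3)))
      = 1 / 2 * ((1 / D * ((1 + 1 / D) * (L1 - L3)) + 1 / D * ((1 - 1 / D) * (L2 - L3)))
          - ((1 + (1 / D) ^ 2) * (L5 - 2 * L3) + (1 - (1 / D) ^ 2) * (L6 - 2 * L3))) := by
    field_simp
    try ring
  rw [heq]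
  linarith [key]
end
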